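/- arXiv:1308.4640 — 3 statements merged into one kernel-verified Lean document; each statement's English description precedes it below -/
import Mathlib

section
/- Let F : ℝ^m → ℝ be smooth with minimizer μ and minimum φ, and let ξ ~ N(0, H⁻¹) with H symmetric positive definite. Suppose for each ξ ≠ 0 the equation F(μ + λξ) − φ = ½ ξᵀHξ has a solution λ(ξ) > 0 depending smoothly on ξ, defining the random map θ(ξ) = μ + λ(ξ)ξ. Then the Jacobian determinant of this map satisfies |det(∂θ/∂ξ)| = |λ(ξ)^{m−1} · (ξᵀHξ)/(∇F(θ)·ξ)|. -/
open Matrix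

/-- Jacobian of the random map of implicit sampling: if `λ(ξ) > 0` solves
`F(μ + λξ) - φ = ½ ξᵀHξ` smoothly in `ξ`, then the Jacobian determinant of the map
`ξ ↦ θ(ξ) = μ + λ(ξ)ξ` is `|λ^{m-1} (ξᵀHξ)/(∇F(θ)·ξ)|`. -/
theorem random_map_jacobian
    {m : ℕ} (F : EuclideanSpace ℝ (Fin m) → ℝ)
    (μv : EuclideanSpace ℝ (Fin m)) (φ : ℝ)
    (H : Matrix (Fin m) (Fin m) ℝ) (hH : H.PosDef)
    (hφ : ∀ θ, φ ≤ F θ) (hφμ : F μv = φ)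
    (hF : ContDiff ℝ (⊤ : ℕ∞) F)
    (lam : EuclideanSpace ℝ (Fin m) → ℝ)
    (hlam_pos : ∀ ξ, ξ ≠ 0 → 0 < lam ξ)
    (hlam_smooth : ContDiffOn ℝ (⊤ : ℕ∞) lam {ξ | ξ ≠ 0})
    (hsol : ∀ ξ, ξ ≠ 0 →
      F (μv + lam ξ • ξ) - φ = (1/2) * ((fun i => ξ i) ⬝ᵥ H *ᵥ (fun i => ξ i)))
    (ξ : EuclideanSpace ℝ (Fin m)) (hξ : ξ ≠ 0)
    (hgrad : inner ℝ (gradient F (μv + lam ξ • ξ)) ξ ≠ (0 : ℝ)) :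
    |LinearMap.det ((fderiv ℝ (fun η => μv + lam η • η) ξ).toLinearMap)|
      = |lam ξ ^ (m - 1) * ((fun i => ξ i) ⬝ᵥ H *ᵥ (fun i => ξ i))
          / inner ℝ (gradient F (μv + lam ξ • ξ)) ξ| := by
  classical
  have hm : m ≠ 0 := by
    rintro rfl
    exact hξ (Subsingleton.elim _ _)
  have hne : Nonempty (Fin m) := ⟨⟨0, Nat.pos_of_ne_zero hm⟩⟩
  have hopen : IsOpen {η : EuclideanSpace ℝ (Fin m) | η ≠ 0} := isOpen_compl_singleton
  have hmem : {η : EuclideanSpace ℝ (Fin m) | η ≠ 0} ∈ nhds ξ := hopen.mem_nhds hξ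
  have hdl : DifferentiableAt ℝ lam ξ :=
    (hlam_smooth.differentiableOn (by simp)).differentiableAt hmem
  set c := lam ξ with hc
  have hcpos : 0 < c := hlam_pos ξ hξ
  set L := fderiv ℝ lam ξ with hL
  set θ := μv + lam ξ • ξ with hθ
  set D : EuclideanSpace ℝ (Fin m) →L[ℝ] EuclideanSpace ℝ (Fin m) :=
    c • ContinuousLinearMap.id ℝ (EuclideanSpace ℝ (Fin m)) + L.smulRight ξ with hD
  have hDθ : HasFDerivAt (fun η : EuclideanSpace ℝ (Fin m) => μv + lam η • η) D ξ := by
    have h1 : HasFDerivAt (fun η : EuclideanSpace ℝ (Fin m) => lam η • η) D ξ := by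
      have := hdl.hasFDerivAt.smul (hasFDerivAt_id ξ)
      exact this
    simpa using h1.const_add μv
  have hgr : ∀ v : EuclideanSpace ℝ (Fin m),
      (inner ℝ (gradient F θ) v : ℝ) = fderiv ℝ F θ v := by
    intro v
    rw [gradient, ← InnerProductSpace.toDual_apply_apply,
      LinearIsometryEquiv.apply_symm_apply]
  set Q : ℝ := (fun i => ξ i) ⬝ᵥ H *ᵥ (fun i => ξ i) with hQ
  set g : ℝ := fderiv ℝ F θ ξ with hg
  have hgne : g ≠ 0 := by rw [hg, ← hgr]; exact hgrad
  set B : EuclideanSpace ℝ (Fin m) →L[ℝ] ℝ := ∑ i : Fin m, ∑ j : Fin m,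
      (ξ i • ((H i j) • (EuclideanSpace.proj j)) + ((H i j) * ξ j) • (EuclideanSpace.proj i))
    with hB
  have hquad : HasFDerivAt
      (fun η : EuclideanSpace ℝ (Fin m) => (fun i => η i) ⬝ᵥ H *ᵥ (fun i => η i)) B ξ := by
    have key : ∀ η : EuclideanSpace ℝ (Fin m), (fun i => η i) ⬝ᵥ H *ᵥ (fun i => η i)
        = ∑ i : Fin m, ∑ j : Fin m, (η i) * ((H i j) * (η j)) := by
      intro η
      simp [dotProduct, Matrix.mulVec, Finset.mul_sum]
    rw [show (fun η : EuclideanSpace ℝ (Fin m) => (fun i => η i) ⬝ᵥ H *ᵥ (fun i => η i))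
        = fun η : EuclideanSpace ℝ (Fin m) =>
            ∑ i : Fin m, ∑ j : Fin m, (η i) * ((H i j) * (η j)) from funext key]
    rw [hB]
    apply HasFDerivAt.fun_sum; intro i _
    apply HasFDerivAt.fun_sum; intro j _
    have hi : HasFDerivAt (fun η : EuclideanSpace ℝ (Fin m) => η i)
        (EuclideanSpace.proj i : EuclideanSpace ℝ (Fin m) →L[ℝ] ℝ) ξ :=
      (EuclideanSpace.proj i : EuclideanSpace ℝ (Fin m) →L[ℝ] ℝ).hasFDerivAt
    have hj : HasFDerivAt (fun η : EuclideanSpace ℝ (Fin m) => (H i j) * (η j))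
        ((H i j) • (EuclideanSpace.proj j) : EuclideanSpace ℝ (Fin m) →L[ℝ] ℝ) ξ :=
      ((EuclideanSpace.proj j : EuclideanSpace ℝ (Fin m) →L[ℝ] ℝ).hasFDerivAt).const_mul (H i j)
    exact hi.mul hj
  have hBξ : B ξ = 2 * Q := by
    have h1 : B ξ = ∑ i : Fin m, ∑ j : Fin m,
        (ξ i * ((H i j) * ξ j) + ((H i j) * ξ j) * ξ i) := by
      simp [hB, PiLp.proj_apply]
    rw [h1, hQ]
    have h2 : (fun i => ξ i) ⬝ᵥ H *ᵥ (fun i => ξ i)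
        = ∑ i : Fin m, ∑ j : Fin m, ξ i * ((H i j) * ξ j) := by
      simp [dotProduct, Matrix.mulVec, Finset.mul_sum]
    rw [h2, Finset.mul_sum]
    refine Finset.sum_congr rfl fun i _ => ?_
    rw [Finset.mul_sum]
    exact Finset.sum_congr rfl fun j _ => by ring
  have hcon : HasFDerivAt (fun η : EuclideanSpace ℝ (Fin m) => F (μv + lam η • η))
      ((1/2 : ℝ) • B) ξ := by
    have hqd : HasFDerivAt
        (fun η : EuclideanSpace ℝ (Fin m) =>
          (1/2 : ℝ) * ((fun i => η i) ⬝ᵥ H *ᵥ (fun i => η i)) + φ)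
        ((1/2 : ℝ) • B) ξ := (hquad.const_mul (1/2)).add_const φ
    apply hqd.congr_of_eventuallyEq
    filter_upwards [hmem] with η hη
    linarith [hsol η hη]
  have hcon2 : HasFDerivAt (fun η : EuclideanSpace ℝ (Fin m) => F (μv + lam η • η))
      ((fderiv ℝ F θ).comp D) ξ :=
    ((hF.differentiable (by simp) θ).hasFDerivAt).comp ξ hDθ
  have hkey : (c + L ξ) * g = Q := by
    have huniq := hcon2.unique hcon
    have h2 : (fderiv ℝ F θ) (D ξ) = (1/2 : ℝ) * B ξ := by
      have : (fderiv ℝ F θ) (D ξ) = ((fderiv ℝ F θ).comp D) ξ := rfl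
      rw [this, huniq]; simp
    rw [hBξ] at h2
    have hDξ : D ξ = (c + L ξ) • ξ := by
      simp [hD, add_smul]
    rw [hDξ, _root_.map_smul] at h2
    simp only [smul_eq_mul] at h2
    rw [← hg] at h2
    linarith
  obtain ⟨k, rfl⟩ : ∃ k, m = k + 1 := ⟨m - 1, (Nat.succ_pred_eq_of_pos (Nat.pos_of_ne_zero hm)).symm⟩
  have hdet : LinearMap.det
      ((fderiv ℝ (fun η : EuclideanSpace ℝ (Fin (k+1))=> μv + lam η • η) ξ).toLinearMap)
      = c ^ k * (c + L ξ) := by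
    rw [hDθ.fderiv]
    set b := (EuclideanSpace.basisFun (Fin (k+1)) ℝ).toBasis with hb
    rw [← LinearMap.det_toMatrix b]
    have hMat : LinearMap.toMatrix b b D.toLinearMap
        = c • (1 + Matrix.replicateCol Unit (fun i => c⁻¹ * ξ i) *
            Matrix.replicateRow Unit (fun j => L (b j))) := by
      ext i j
      simp only [LinearMap.toMatrix_apply, hb, OrthonormalBasis.coe_toBasis_repr_apply,
        OrthonormalBasis.coe_toBasis, EuclideanSpace.basisFun_repr,
        Matrix.smul_apply, Matrix.add_apply, Matrix.one_apply, Matrix.mul_apply,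
        Matrix.replicateCol_apply, Matrix.replicateRow_apply, Finset.univ_unique, Finset.sum_singleton,
        ContinuousLinearMap.coe_coe, hD, ContinuousLinearMap.add_apply,
        ContinuousLinearMap.smul_apply, ContinuousLinearMap.id_apply,
        ContinuousLinearMap.smulRight_apply, PiLp.add_apply, PiLp.smul_apply,
        smul_eq_mul]
      have hc0 : c ≠ 0 := hcpos.ne'
      by_cases hij : i = j <;> simp [hij, mul_add] <;> field_simp <;> ring
    rw [hMat, Matrix.det_smul, Matrix.det_one_add_replicateCol_mul_replicateRow]
    have hLξ : L ξ = ∑ j : Fin (k+1), ξ j * L (b j) := by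
      conv_lhs => rw [← b.sum_repr ξ]
      rw [map_sum]
      refine Finset.sum_congr rfl fun j _ => ?_
      simp [hb, OrthonormalBasis.coe_toBasis_repr_apply, EuclideanSpace.basisFun_repr]
    have hdot : (fun j => L (b j)) ⬝ᵥ (fun i => c⁻¹ * ξ i) = c⁻¹ * L ξ := by
      rw [hLξ, dotProduct, Finset.mul_sum]
      exact Finset.sum_congr rfl fun j _ => by ring
    rw [hdot]
    have : (Fintype.card (Fin (k+1))) = k + 1 := by simp
    rw [this]
    field_simp
    ring
  rw [hdet]
  have hfrac : c + L ξ = Q / g := by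
    field_simp
    linarith [hkey]
  rw [hfrac, hgr ξ, ← hg, Nat.add_sub_cancel, mul_div_assoc]
end

section
/- In the symmetrized linear-map implicit sampling scheme, let ξ ~ N(0, H⁻¹), x⁺ = μ + ξ, x⁻ = μ − ξ, with weights w(x) = exp(F₀(x) − F(x)). Choose X = x⁺ with probability w(x⁺)/(w(x⁺)+w(x⁻)) and X = x⁻ otherwise, and assign weight wˢ = (w(x⁺) + w(x⁻))/2. Then for any bounded measurable u, E[u(X) wˢ] = E[u(x⁺) w(x⁺)]; i.e., the symmetrized weighted estimator has the same expectation as the original linear-map weighted estimator. -/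
/-!
Conditionally on `ξ`, integrating out the uniform variable `U` turns `u(X) wˢ` into
`(u(x⁺) w(x⁺) + u(x⁻) w(x⁻)) / 2`: the selection probabilities `w(x^±) / (w(x⁺) + w(x⁻))`
cancel the normalisation in `wˢ`. The Gaussian density is even, so `ξ` and `-ξ` have the same
law and the two halves have the same expectation.
-/

open MeasureTheory ProbabilityTheory

lemma MeasureTheory.Measure.isNegInvariant_withDensity {G : Type*} [MeasurableSpace G]
    [AddGroup G] [MeasurableNeg G] {μ : Measure G} [μ.IsNegInvariant] {f : G → ENNReal}
    (hf : ∀ x, f (-x) = f x) : (μ.withDensity f).IsNegInvariant := by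
  refine ⟨Measure.ext fun s hs => ?_⟩
  rw [Measure.neg_apply, withDensity_apply _ hs.neg, withDensity_apply _ hs,
    ← lintegral_indicator hs.neg, ← lintegral_indicator hs, ← lintegral_neg_eq_self]
  congr 1 with x
  by_cases hx : x ∈ s <;> simp [Set.indicator, hx, hf]

lemma integral_add_comp_neg_div_two {G E : Type*} [MeasurableSpace G] [AddGroup G]
    [MeasurableNeg G] [NormedAddCommGroup E] [NormedSpace ℝ E] {μ : Measure G}
    [μ.IsNegInvariant] {h : G → E} (hh : Integrable h μ) :
    ∫ x, (2 : ℝ)⁻¹ • (h x + h (-x)) ∂μ = ∫ x, h x ∂μ := by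
  rw [integral_smul, integral_add hh hh.comp_neg, integral_neg_eq_self, ← two_smul ℝ, smul_smul]
  norm_num

lemma ProbabilityTheory.IndepFun.integral_comp_prodMk {Ω α β E : Type*} [MeasurableSpace Ω]
    [MeasurableSpace α] [MeasurableSpace β] [NormedAddCommGroup E] [NormedSpace ℝ E]
    {P : Measure Ω} [IsProbabilityMeasure P] {X : Ω → α} {Y : Ω → β}
    (hXY : IndepFun X Y P) (hX : Measurable X) (hY : Measurable Y) {f : α × β → E}
    (hf : StronglyMeasurable f) (hint : Integrable (fun ω => f (X ω, Y ω)) P) :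
    ∫ ω, f (X ω, Y ω) ∂P = ∫ x, ∫ y, f (x, y) ∂(P.map Y) ∂(P.map X) := by
  have hpair : Measurable fun ω => (X ω, Y ω) := hX.prodMk hY
  have hlaw : P.map (fun ω => (X ω, Y ω)) = (P.map X).prod (P.map Y) :=
    (indepFun_iff_map_prod_eq_prod_map_map hX.aemeasurable hY.aemeasurable).mp hXY
  have hfint : Integrable f ((P.map X).prod (P.map Y)) := by
    rwa [← hlaw, integrable_map_measure hf.aestronglyMeasurable hpair.aemeasurable]
  rw [← integral_prod f hfint, ← hlaw, integral_map hpair.aemeasurable hf.aestronglyMeasurable]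

lemma integral_Icc_ite_le {E : Type*} [NormedAddCommGroup E] [NormedSpace ℝ E] [CompleteSpace E]
    {c : ℝ} (hc0 : 0 ≤ c) (hc1 : c ≤ 1) (p q : E) :
    ∫ t in Set.Icc (0 : ℝ) 1, (if t ≤ c then p else q) = c • p + (1 - c) • q := by
  have hsplit : ∀ t : ℝ,
      (if t ≤ c then p else q) = (Set.Iic c).indicator (fun _ => p - q) t + q := by
    intro t; by_cases ht : t ≤ c <;> simp [ht]
  have hinter : Set.Iic c ∩ Set.Icc 0 1 = Set.Icc 0 c := by
    ext t; simp only [Set.mem_inter_iff, Set.mem_Iic, Set.mem_Icc]; grind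
  simp_rw [hsplit]
  rw [integral_add ((integrable_const _).indicator measurableSet_Iic) (integrable_const _),
    integral_indicator measurableSet_Iic, Measure.restrict_restrict measurableSet_Iic, hinter,
    setIntegral_const, setIntegral_const, Real.volume_real_Icc_of_le hc0,
    Real.volume_real_Icc_of_le zero_le_one]
  simp only [sub_zero, one_smul, smul_sub, sub_smul]
  abel

lemma integral_Icc_ite_mul_le {a b : ℝ} (ha : 0 < a) (hb : 0 < b) (p q : ℝ) :
    ∫ t in Set.Icc (0 : ℝ) 1, (if t * (a + b) ≤ a then p else q) * ((a + b) / 2)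
      = (p * a + q * b) / 2 := by
  have hab : 0 < a + b := by linarith
  simp_rw [← le_div_iff₀ hab]
  rw [integral_mul_const, integral_Icc_ite_le (by positivity) ((div_le_one hab).2 (by linarith))]
  simp only [smul_eq_mul]
  field_simp
  ring

theorem integral_antithetic_selection {Ω V : Type*} [MeasurableSpace Ω] [MeasurableSpace V]
    [AddGroup V] [MeasurableAdd V] [MeasurableSub V] [MeasurableNeg V]
    {P : Measure Ω} [IsProbabilityMeasure P] {ξ : Ω → V} {U : Ω → ℝ}
    (hξ : Measurable ξ) (hU : Measurable U) (hξU : IndepFun ξ U P)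
    (hsymm : (P.map ξ).IsNegInvariant) (hunif : P.map U = volume.restrict (Set.Icc 0 1))
    {c : V} {w u : V → ℝ} (hw : Measurable w) (hwpos : ∀ x, 0 < w x) (hu : Measurable u)
    (hint : Integrable (fun ω => u (if U ω * (w (c + ξ ω) + w (c - ξ ω)) ≤ w (c + ξ ω)
      then c + ξ ω else c - ξ ω) * ((w (c + ξ ω) + w (c - ξ ω)) / 2)) P)
    (hint' : Integrable (fun ω => u (c + ξ ω) * w (c + ξ ω)) P) :
    ∫ ω, u (if U ω * (w (c + ξ ω) + w (c - ξ ω)) ≤ w (c + ξ ω)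
      then c + ξ ω else c - ξ ω) * ((w (c + ξ ω) + w (c - ξ ω)) / 2) ∂P
      = ∫ ω, u (c + ξ ω) * w (c + ξ ω) ∂P := by
  set f : V × ℝ → ℝ := fun p =>
    u (if p.2 * (w (c + p.1) + w (c - p.1)) ≤ w (c + p.1) then c + p.1 else c - p.1)
      * ((w (c + p.1) + w (c - p.1)) / 2)
  have hfm : Measurable f := by
    refine (hu.comp (Measurable.ite (measurableSet_le ?_ ?_) ?_ ?_)).mul ?_ <;> fun_prop
  set g : V → ℝ := fun x => u (c + x) * w (c + x)
  have hgm : Measurable g := by fun_prop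
  have hinner : ∀ x, ∫ t, f (x, t) ∂(P.map U) = (2 : ℝ)⁻¹ • (g x + g (-x)) := by
    intro x
    simp only [hunif, f, apply_ite u]
    rw [integral_Icc_ite_mul_le (hwpos _) (hwpos _)]
    simp only [g, smul_eq_mul, ← sub_eq_add_neg]
    ring
  have hgint : Integrable g (P.map ξ) :=
    (integrable_map_measure hgm.aestronglyMeasurable hξ.aemeasurable).2 hint'
  rw [hξU.integral_comp_prodMk hξ hU hfm.stronglyMeasurable hint,
    integral_congr_ae (ae_of_all _ hinner), integral_add_comp_neg_div_two hgint,
    integral_map hξ.aemeasurable hgm.aestronglyMeasurable]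

open Matrix

theorem symmetrized_linear_map_unbiased_general
    {m : ℕ} (F F₀ : (Fin m → ℝ) → ℝ)
    (μv : Fin m → ℝ) (φ : ℝ)
    (H : Matrix (Fin m) (Fin m) ℝ)
    (hFm : Measurable F)
    (hF₀ : ∀ θ, F₀ θ = φ + (1/2) * ((θ - μv) ⬝ᵥ H *ᵥ (θ - μv)))
    (w : (Fin m → ℝ) → ℝ) (hw : ∀ x, w x = Real.exp (F₀ x - F x))
    {Ω : Type*} [MeasureSpace Ω] [IsProbabilityMeasure (volume : Measure Ω)]
    (ξ : Ω → (Fin m → ℝ)) (hξm : Measurable ξ)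
    (hξ : Measure.map ξ (volume : Measure Ω) = volume.withDensity
      (fun x => ENNReal.ofReal ((Real.sqrt ((2 * Real.pi) ^ m * (H⁻¹).det))⁻¹
        * Real.exp (-(1/2) * (x ⬝ᵥ H *ᵥ x)))))
    (U : Ω → ℝ) (hUm : Measurable U)
    (hU : Measure.map U (volume : Measure Ω)
      = (volume : Measure ℝ).restrict (Set.Icc 0 1))
    (hUξ : IndepFun ξ U)
    (xp xm : Ω → (Fin m → ℝ))
    (hxp : ∀ ω, xp ω = μv + ξ ω) (hxm : ∀ ω, xm ω = μv - ξ ω)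
    (X : Ω → (Fin m → ℝ))
    (hX : ∀ ω, X ω = if U ω * (w (xp ω) + w (xm ω)) ≤ w (xp ω) then xp ω else xm ω)
    (ws : Ω → ℝ) (hws : ∀ ω, ws ω = (w (xp ω) + w (xm ω)) / 2)
    (u : (Fin m → ℝ) → ℝ) (hu : Measurable u)
    (hint1 : Integrable (fun ω => u (X ω) * ws ω))
    (hint2 : Integrable (fun ω => u (xp ω) * w (xp ω))) :
    ∫ ω, u (X ω) * ws ω = ∫ ω, u (xp ω) * w (xp ω) := by
  have hwpos : ∀ x, 0 < w x := fun x => hw x ▸ Real.exp_pos _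
  have hwm : Measurable w := by
    have hF₀m : Measurable F₀ := by
      rw [funext hF₀]; exact (by fun_prop : Continuous _).measurable
    rw [funext hw]; fun_prop
  have hsymm : (volume.map ξ).IsNegInvariant := by
    rw [hξ]; exact Measure.isNegInvariant_withDensity fun x => by simp [mulVec_neg]
  simp only [hX, hws, hxp, hxm] at hint1 hint2 ⊢
  exact integral_antithetic_selection hξm hUm hUξ hsymm hU hwm hwpos hu hint1 hint2

/-- Unbiasedness of symmetrized implicit sampling with linear maps: with
`ξ ~ N(0, H⁻¹)`, `x⁺ = μ + ξ`, `x⁻ = μ - ξ`, weights `w = exp(F₀ - F)`, choosing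
`X = x⁺` with probability `w(x⁺)/(w(x⁺) + w(x⁻))` (via an independent uniform `U`) and
`X = x⁻` otherwise, with symmetrized weight `wˢ = (w(x⁺)+w(x⁻))/2`, the weighted
estimator `E[u(X)wˢ]` equals the original `E[u(x⁺)w(x⁺)]`. -/
theorem symmetrized_linear_map_unbiased
    {m : ℕ} (F F₀ : (Fin m → ℝ) → ℝ)
    (μv : Fin m → ℝ) (φ : ℝ)
    (H : Matrix (Fin m) (Fin m) ℝ) (hH : H.PosDef)
    (hφ : ∀ θ, φ ≤ F θ) (hφμ : F μv = φ) (hFm : Measurable F)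
    (hF₀ : ∀ θ, F₀ θ = φ + (1/2) * ((θ - μv) ⬝ᵥ H *ᵥ (θ - μv)))
    (w : (Fin m → ℝ) → ℝ) (hw : ∀ x, w x = Real.exp (F₀ x - F x))
    {Ω : Type*} [MeasureSpace Ω] [IsProbabilityMeasure (volume : Measure Ω)]
    (ξ : Ω → (Fin m → ℝ)) (hξm : Measurable ξ)
    (hξ : Measure.map ξ (volume : Measure Ω) = volume.withDensity
      (fun x => ENNReal.ofReal ((Real.sqrt ((2 * Real.pi) ^ m * (H⁻¹).det))⁻¹
        * Real.exp (-(1/2) * (x ⬝ᵥ H *ᵥ x)))))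
    (U : Ω → ℝ) (hUm : Measurable U)
    (hU : Measure.map U (volume : Measure Ω)
      = (volume : Measure ℝ).restrict (Set.Icc 0 1))
    (hUξ : IndepFun ξ U)
    (xp xm : Ω → (Fin m → ℝ))
    (hxp : ∀ ω, xp ω = μv + ξ ω) (hxm : ∀ ω, xm ω = μv - ξ ω)
    (X : Ω → (Fin m → ℝ))
    (hX : ∀ ω, X ω = if U ω * (w (xp ω) + w (xm ω)) ≤ w (xp ω) then xp ω else xm ω)
    (ws : Ω → ℝ) (hws : ∀ ω, ws ω = (w (xp ω) + w (xm ω)) / 2)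
    (u : (Fin m → ℝ) → ℝ) (hu : Measurable u) (hub : ∃ C, ∀ x, |u x| ≤ C)
    (hint1 : Integrable (fun ω => u (X ω) * ws ω))
    (hint2 : Integrable (fun ω => u (xp ω) * w (xp ω))) :
    ∫ ω, u (X ω) * ws ω = ∫ ω, u (xp ω) * w (xp ω) :=
  symmetrized_linear_map_unbiased_general F F₀ μv φ H hFm hF₀ w hw ξ hξm hξ U hUm hU hUξ xp xm hxp
    hxm X hX ws hws u hu hint1 hint2
end

section
/- Let F, F₀, μ, H be as in the linear map method and suppose F₀ − F is an odd function of ξ = θ − μ (i.e., F₀(μ+ξ) − F(μ+ξ) = −(F₀(μ−ξ) − F(μ−ξ))). Then the symmetrized weight wˢ(ξ) = (e^{F₀(μ+ξ)−F(μ+ξ)} + e^{F₀(μ−ξ)−F(μ−ξ)})/2 = cosh(F₀(μ+ξ) − F(μ+ξ)) satisfies wˢ ≥ 1 and wˢ(ξ) − 1 = O((F₀ − F)²), whereas the non-symmetrized weight deviates from 1 at first order in F₀ − F. -/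
/-!
Under the oddness assumption the antithetic pair carries the weights `e^{δ}` and `e^{-δ}`,
so their mean is `cosh δ`. Both error bounds are second-order Taylor expansions at `0` with
Lagrange remainder; `cosh` has no linear term because it is even, while `exp` does.
-/

open Set

theorem taylor_mean_remainder_lagrange_two {f : ℝ → ℝ} (hf : ContDiff ℝ 2 f) (x₀ x : ℝ) :
    ∃ c ∈ uIcc x₀ x,
      f x - f x₀ - deriv f x₀ * (x - x₀) = iteratedDeriv 2 f c * (x - x₀) ^ 2 / 2 := by
  rcases eq_or_ne x₀ x with rfl | hx
  · exact ⟨x₀, left_mem_uIcc, by simp⟩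
  obtain ⟨c, hc, hrem⟩ := taylor_mean_remainder_lagrange_iteratedDeriv (n := 1) hx hf.contDiffOn
  refine ⟨c, uIoo_subset_uIcc_self hc, ?_⟩
  have hderiv : iteratedDerivWithin 1 f (uIcc x₀ x) x₀ = deriv f x₀ := by
    rw [iteratedDerivWithin_eq_iteratedDeriv (n := 1) (uniqueDiffOn_uIcc hx)
      (hf.contDiffAt.of_le one_le_two) left_mem_uIcc, iteratedDeriv_one]
  rw [taylor_within_apply] at hrem
  simp only [Finset.sum_range_succ, Finset.sum_range_zero, hderiv] at hrem
  norm_num at hrem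
  linarith

namespace Real

theorem abs_exp_sub_one_sub_id_le_sq_mul_exp_abs (x : ℝ) :
    |exp x - 1 - x| ≤ x ^ 2 / 2 * exp |x| := by
  obtain ⟨c, hc, hrem⟩ := taylor_mean_remainder_lagrange_two contDiff_exp 0 x
  have hc_le : c ≤ |x| := (le_abs_self c).trans (by simpa using abs_sub_left_of_mem_uIcc hc)
  simp only [iteratedDeriv_succ, iteratedDeriv_zero, deriv_exp, exp_zero, one_mul,
    sub_zero] at hrem
  rw [hrem, abs_of_nonneg (by positivity), mul_div_assoc, mul_comm]
  gcongr

theorem cosh_sub_one_le_sq_mul_cosh (x : ℝ) : cosh x - 1 ≤ x ^ 2 / 2 * cosh x := by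
  obtain ⟨c, hc, hrem⟩ := taylor_mean_remainder_lagrange_two contDiff_cosh 0 x
  have hc_le : |c| ≤ |x| := by simpa using abs_sub_left_of_mem_uIcc hc
  simp only [iteratedDeriv_succ, iteratedDeriv_zero, deriv_cosh, deriv_sinh, cosh_zero,
    sinh_zero, zero_mul, sub_zero] at hrem
  rw [hrem, mul_div_assoc, mul_comm]
  gcongr
  exact cosh_le_cosh.mpr hc_le

end Real

open Matrix

theorem symmetrized_weight_cosh_general
    {m : ℕ} (F F₀ : (Fin m → ℝ) → ℝ)
    (μv : Fin m → ℝ)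
    (w : (Fin m → ℝ) → ℝ) (hw : ∀ x, w x = Real.exp (F₀ x - F x))
    (δ : (Fin m → ℝ) → ℝ) (hδ : ∀ ξ, δ ξ = F₀ (μv + ξ) - F (μv + ξ))
    (hodd : ∀ ξ, F₀ (μv + ξ) - F (μv + ξ) = -(F₀ (μv - ξ) - F (μv - ξ)))
    (ws : (Fin m → ℝ) → ℝ) (hws : ∀ ξ, ws ξ = (w (μv + ξ) + w (μv - ξ)) / 2) :
    ∀ ξ : Fin m → ℝ,
      ws ξ = Real.cosh (δ ξ) ∧
      1 ≤ ws ξ ∧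
      ws ξ - 1 ≤ (δ ξ) ^ 2 / 2 * Real.cosh (δ ξ) ∧
      |w (μv + ξ) - 1 - δ ξ| ≤ (δ ξ) ^ 2 / 2 * Real.exp |δ ξ| := by
  intro ξ
  have hplus : w (μv + ξ) = Real.exp (δ ξ) := by rw [hw, hδ]
  have hminus : w (μv - ξ) = Real.exp (-δ ξ) := by rw [hw, hδ, hodd, neg_neg]
  have hcosh : ws ξ = Real.cosh (δ ξ) := by rw [hws, hplus, hminus, Real.cosh_eq]
  rw [hcosh, hplus]
  exact ⟨rfl, Real.one_le_cosh _, Real.cosh_sub_one_le_sq_mul_cosh _,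
    Real.abs_exp_sub_one_sub_id_le_sq_mul_exp_abs _⟩

/-- Second-order accuracy of the symmetrized weight: if the perturbation
`δ(ξ) = F₀(μ+ξ) - F(μ+ξ)` is odd in `ξ`, then the symmetrized weight
`wˢ(ξ) = (w(μ+ξ) + w(μ-ξ))/2` equals `cosh δ(ξ)`, is at least `1`, and deviates from `1`
only at second order in `δ`, while the plain weight `w(μ+ξ) = e^{δ(ξ)}` deviates from `1`
at first order (with second-order error bound). -/
theorem symmetrized_weight_cosh
    {m : ℕ} (F F₀ : (Fin m → ℝ) → ℝ)
    (μv : Fin m → ℝ) (φ : ℝ)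
    (H : Matrix (Fin m) (Fin m) ℝ) (hH : H.PosDef)
    (hφ : ∀ θ, φ ≤ F θ) (hφμ : F μv = φ)
    (hF₀ : ∀ θ, F₀ θ = φ + (1/2) * ((θ - μv) ⬝ᵥ H *ᵥ (θ - μv)))
    (w : (Fin m → ℝ) → ℝ) (hw : ∀ x, w x = Real.exp (F₀ x - F x))
    (δ : (Fin m → ℝ) → ℝ) (hδ : ∀ ξ, δ ξ = F₀ (μv + ξ) - F (μv + ξ))
    (hodd : ∀ ξ, F₀ (μv + ξ) - F (μv + ξ) = -(F₀ (μv - ξ) - F (μv - ξ)))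
    (ws : (Fin m → ℝ) → ℝ) (hws : ∀ ξ, ws ξ = (w (μv + ξ) + w (μv - ξ)) / 2) :
    ∀ ξ : Fin m → ℝ,
      ws ξ = Real.cosh (δ ξ) ∧
      1 ≤ ws ξ ∧
      ws ξ - 1 ≤ (δ ξ) ^ 2 / 2 * Real.cosh (δ ξ) ∧
      |w (μv + ξ) - 1 - δ ξ| ≤ (δ ξ) ^ 2 / 2 * Real.exp |δ ξ| :=
  symmetrized_weight_cosh_general F F₀ μv w hw δ hδ hodd ws hws
end
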